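/- Let I₅ ⊆ P be the ideal generated by {Dⁱ(g) : i ≥ 0} where g = (w⁽⁰⁾)² − (ℓ⁽⁰⁾)⁵. Let r = 2ℓ⁽⁰⁾w⁽¹⁾ − 5ℓ⁽¹⁾w⁽⁰⁾ ∈ P. Then r ∉ I₅; in particular the image of r in P/I₅ is a nonzero nilpotent element. -/
import Mathlib


open MvPolynomial

noncomputable section

/-- The polynomial ring `P = ℂ[ℓ⁽⁰⁾, ℓ⁽¹⁾, …, w⁽⁰⁾, w⁽¹⁾, …]`:
variables are indexed by `Fin 2 × ℕ`, where `(0, i)` is `ℓ⁽ⁱ⁾` and `(1, i)` is `w⁽ⁱ⁾`. -/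
abbrev P : Type := MvPolynomial (Fin 2 × ℕ) ℂ

/-- The unique ℂ-linear derivation `D : P → P` with `D(ℓ⁽ⁱ⁾) = ℓ⁽ⁱ⁺¹⁾`, `D(w⁽ⁱ⁾) = w⁽ⁱ⁺¹⁾`. -/
def D : Derivation ℂ P P :=
  MvPolynomial.mkDerivation ℂ (fun p : Fin 2 × ℕ => (X (p.1, p.2 + 1) : P))

/-- `ℓ⁽ⁱ⁾` -/
def lv (i : ℕ) : P := X (0, i)

/-- `w⁽ⁱ⁾` -/
def wv (i : ℕ) : P := X (1, i)

/-- `g = (w⁽⁰⁾)² − (ℓ⁽⁰⁾)⁵`. -/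
def g : P := wv 0 ^ 2 - lv 0 ^ 5

/-- The ideal `I₅` generated by all `Dⁱ(g)`, `i ≥ 0`. -/
def I₅ : Ideal P := Ideal.span (Set.range fun i : ℕ => (⇑D)^[i] g)

/-- `r = 2ℓ⁽⁰⁾w⁽¹⁾ − 5ℓ⁽¹⁾w⁽⁰⁾`. -/
def r : P := 2 * lv 0 * wv 1 - 5 * lv 1 * wv 0

-- ## Auxiliary lemmas

lemma D_X (p : Fin 2 × ℕ) : D (X p) = X (p.1, p.2 + 1) := mkDerivation_X _ _ _
lemma D_lv (i : ℕ) : D (lv i) = lv (i+1) := D_X _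
lemma D_wv (i : ℕ) : D (wv i) = wv (i+1) := D_X _
lemma D_ofNat (n : ℕ) [n.AtLeastTwo] : D (OfNat.ofNat n : P) = 0 := by
  rw [show (OfNat.ofNat n : P) = C ((n : ℂ)) by push_cast [C_eq_coe_nat]; norm_cast]
  exact derivation_C D _

def g1 : P := 2*wv 0*wv 1 - 5*lv 0^4*lv 1
def g2 : P := 2*wv 1^2 + 2*wv 0*wv 2 - 20*lv 0^3*lv 1^2 - 5*lv 0^4*lv 2

lemma hDg : D g = g1 := by
  simp only [g, g1, map_sub, Derivation.leibniz, Derivation.leibniz_pow, D_lv, D_wv,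
    smul_eq_mul, nsmul_eq_mul]
  ring
lemma hDg1 : D g1 = g2 := by
  have h2 : D (2:P) = 0 := D_ofNat 2
  have h5 : D (5:P) = 0 := D_ofNat 5
  simp only [g1, g2, map_sub, map_add, Derivation.leibniz, Derivation.leibniz_pow, D_lv, D_wv,
    smul_eq_mul, nsmul_eq_mul, h2, h5]
  ring

lemma g_mem : g ∈ I₅ := Ideal.subset_span ⟨0, rfl⟩
lemma g1_mem : g1 ∈ I₅ := Ideal.subset_span ⟨1, by simp [hDg]⟩
lemma g2_mem : g2 ∈ I₅ := Ideal.subset_span ⟨2, by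
  simp [Function.iterate_succ_apply', hDg, hDg1]⟩

lemma r_cubed_mem : r ^ 3 ∈ I₅ := by
  have key : r ^ 3 =
      (-125*lv 1^3*wv 0 + 20*lv 0*lv 1^2*wv 1 - 20*lv 0^2*lv 2*wv 1 + 20*lv 0^2*lv 1*wv 2) * g
    + (65*lv 0*lv 1^2*wv 0 + 10*lv 0^2*lv 2*wv 0 - 20*lv 0^2*lv 1*wv 1 - 4*lv 0^3*wv 2) * g1
    + (-10*lv 0^2*lv 1*wv 0 + 4*lv 0^3*wv 1) * g2 := by
    simp only [r, g, g1, g2]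
    ring
  rw [key]
  exact add_mem (add_mem (Ideal.mul_mem_left _ _ g_mem) (Ideal.mul_mem_left _ _ g1_mem))
    (Ideal.mul_mem_left _ _ g2_mem)

-- ## Non-membership via the weight grading, implemented through a scaling map
abbrev B : Type := MvPolynomial (Fin 2 × ℕ) (Polynomial ℂ)

def wt (p : Fin 2 × ℕ) : ℕ := 2 + 3 * (p.1 : ℕ) + p.2

def φ : P →ₐ[ℂ] B := aeval fun p => C (Polynomial.X ^ wt p) * X p

def D' : Derivation (Polynomial ℂ) B B :=
  MvPolynomial.mkDerivation (Polynomial ℂ) (fun p : Fin 2 × ℕ => (X (p.1, p.2 + 1) : B))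

lemma D'_X (p : Fin 2 × ℕ) : D' (X p) = X (p.1, p.2 + 1) := mkDerivation_X _ _ _

lemma φ_X (p : Fin 2 × ℕ) : φ (X p) = C (Polynomial.X ^ wt p) * X p := aeval_X _ _

lemma key (f : P) : φ (D f) = C Polynomial.X * D' (φ f) := by
  induction f using MvPolynomial.induction_on with
  | C a =>
      have h1 : D (C a : P) = 0 := derivation_C D a
      have h2 : (φ (C a) : B) = C (Polynomial.C a) := by
        simp [φ, aeval_C, MvPolynomial.algebraMap_eq, Polynomial.algebraMap_eq]
      simp [h1, h2, derivation_C]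
  | add p q hp hq => simp only [map_add, hp, hq, mul_add]
  | mul_X q i hq =>
      simp only [map_mul, Derivation.leibniz, smul_eq_mul, map_add, map_mul, D_X, φ_X, hq, D'_X, derivation_C]
      have : wt (i.1, i.2 + 1) = wt i + 1 := by simp only [wt]; ring
      rw [this, pow_succ, map_mul]
      ring

def gB : B := X (1,0) ^ 2 - X (0,0) ^ 5

lemma iter_eq (i : ℕ) :
    φ ((⇑D)^[i] g) = C (Polynomial.X ^ (10 + i)) * ((⇑D')^[i] gB) := by
  induction i with
  | zero =>
      simp only [Function.iterate_zero, id_eq, g, gB, lv, wv, map_sub, map_pow, φ_X]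
      rw [show wt (1,0) = 5 from rfl, show wt ((0:Fin 2),0) = 2 from rfl]
      ring
  | succ i ih =>
      have hs : D' (C (Polynomial.X^(10+i)) * (⇑D')^[i] gB)
          = C (Polynomial.X^(10+i)) * D' ((⇑D')^[i] gB) := by
        rw [← smul_eq_C_mul, ← smul_eq_C_mul, Derivation.map_smul]
      rw [Function.iterate_succ_apply', key, ih, hs, Function.iterate_succ_apply']
      simp only [map_pow]
      ring

lemma phi_of_mem {f : P} (hf : f ∈ I₅) : ∃ h : B, φ f = C (Polynomial.X ^ 10) * h := by
  refine Submodule.span_induction ?_ ?_ ?_ ?_ hf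
  · rintro x ⟨i, rfl⟩
    refine ⟨C (Polynomial.X ^ i) * ((⇑D')^[i] gB), ?_⟩
    rw [iter_eq, pow_add, map_mul, mul_assoc]
  · exact ⟨0, by simp⟩
  · rintro x y - - ⟨hx, ex⟩ ⟨hy, ey⟩
    exact ⟨hx + hy, by rw [map_add, ex, ey, mul_add]⟩
  · rintro a x - ⟨hx, ex⟩
    exact ⟨φ a * hx, by rw [smul_eq_mul, map_mul, ex]; ring⟩

def ψ : B →ₐ[Polynomial ℂ] Polynomial ℂ :=
  aeval fun p => if p = ((0:Fin 2), (0:ℕ)) ∨ p = (1,1) then 1 else 0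

lemma r_notMem : r ∉ I₅ := by
  intro hr
  obtain ⟨h, hh⟩ := phi_of_mem hr
  have e1 : ψ (φ r) = 2 * Polynomial.X ^ 8 := by
    simp only [r, lv, wv, map_sub, map_mul, map_ofNat, φ_X, ψ, aeval_X, aeval_C]
    norm_num [wt, Prod.ext_iff]
    ring
  have e2 : ψ (φ r) = Polynomial.X ^ 10 * ψ h := by
    rw [hh, map_mul, ψ, aeval_C]
    norm_num
  have e3 : (Polynomial.X:Polynomial ℂ)^8 * 2 = Polynomial.X^8 * (Polynomial.X^2 * ψ h) := by
    rw [← mul_assoc, ← pow_add]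
    rw [e1] at e2
    linear_combination e2
  have e4 := mul_left_cancel₀ (pow_ne_zero 8 (Polynomial.X_ne_zero (R := ℂ))) e3
  have := congrArg (Polynomial.eval 0) e4
  simp at this


/-- `r ∉ I₅`; in particular the image of `r` in `P/I₅` is a nonzero nilpotent element. -/
theorem r_not_mem_I₅ :
    r ∉ I₅ ∧ Ideal.Quotient.mk I₅ r ≠ 0 ∧ IsNilpotent (Ideal.Quotient.mk I₅ r) := by
  refine ⟨r_notMem, ?_, ⟨3, ?_⟩⟩
  · rw [ne_eq, Ideal.Quotient.eq_zero_iff_mem]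
    exact r_notMem
  · rw [← map_pow, Ideal.Quotient.eq_zero_iff_mem]
    exact r_cubed_mem
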